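/- arXiv:2506.15905 — 9 statements merged into one kernel-verified Lean document; each statement's English description precedes it below -/
import Mathlib

section
/- Let ι be a finite index type and x : ι → ℤ a family of integers each equal to 0 or 1. Then the Boolean XOR of the family (i.e., the element of {0,1} ⊂ ℤ equal to 1 exactly when an odd number of the x i equal 1) satisfies the inclusion–exclusion identity: XOR_{i} x i = ∑_{S ⊆ ι, S ≠ ∅} (−1)^{|S|+1} · 2^{|S|−1} · ∏_{i ∈ S} x i. -/
/-!
Both sides are read off the product `∏ i, (1 - 2 x i)`. Each bit contributes the sign
`(-1) ^ x i`, so the product is `(-1) ^ #{i | x i = 1} = 1 - 2 · XOR`; expanding it over subsets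
gives `∑_S (-2) ^ #S ∏_{i ∈ S} x i`, whose nonempty terms are `-2` times those of the right-hand side.
-/

open Finset

section
variable {ι R : Type*} [CommRing R]

theorem two_mul_ite_odd (n : ℕ) : 2 * (if Odd n then (1 : R) else 0) = 1 - (-1) ^ n := by
  rcases Nat.even_or_odd n with h | h
  · simp [h.neg_one_pow, Nat.not_odd_iff_even.mpr h]
  · rw [if_pos h, h.neg_one_pow]; ring

theorem prod_one_sub_two_mul_of_bits [DecidableEq R] (s : Finset ι) {x : ι → R}
    (hx : ∀ i ∈ s, x i = 0 ∨ x i = 1) :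
    ∏ i ∈ s, (1 - 2 * x i) = (-1) ^ #(s.filter fun i => x i = 1) := by
  have hsign : ∀ i ∈ s, 1 - 2 * x i = (-1) ^ (if x i = 1 then 1 else 0) := by
    intro i hi
    by_cases h1 : x i = 1
    · rw [if_pos h1, h1]; ring
    · rw [if_neg h1, (hx i hi).resolve_right h1]; ring
  rw [prod_congr rfl hsign, prod_pow_eq_pow_sum, card_filter]

theorem neg_two_pow_of_ne_zero {n : ℕ} (hn : n ≠ 0) :
    (-2 : R) ^ n = -2 * ((-1) ^ (n + 1) * 2 ^ (n - 1)) := by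
  obtain ⟨k, rfl⟩ := Nat.exists_eq_add_one_of_ne_zero hn
  rw [Nat.add_sub_cancel, neg_pow]
  ring

theorem prod_one_sub_two_mul [DecidableEq ι] (s : Finset ι) (x : ι → R) :
    ∏ i ∈ s, (1 - 2 * x i) =
      1 - 2 * ∑ S ∈ s.powerset.filter (fun S => S ≠ ∅),
        (-1) ^ (#S + 1) * 2 ^ (#S - 1) * ∏ i ∈ S, x i := by
  have hexpand : ∏ i ∈ s, (1 - 2 * x i) = ∑ S ∈ s.powerset, (-2) ^ #S * ∏ i ∈ S, x i := by
    simp only [sub_eq_add_neg, ← neg_mul, prod_one_add, prod_mul_distrib, prod_const]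
  rw [hexpand, filter_ne', ← add_sum_erase _ _ (empty_mem_powerset s), mul_sum]
  simp only [card_empty, pow_zero, prod_empty, mul_one, sub_eq_add_neg, ← sum_neg_distrib]
  congr 1
  refine sum_congr rfl fun S hS => ?_
  rw [neg_two_pow_of_ne_zero (card_ne_zero.mpr (nonempty_iff_ne_empty.mpr (ne_of_mem_erase hS)))]
  ring

end

/-- **Inclusion–exclusion identity for the XOR of a family of bits.**
Bits are integers equal to 0 or 1; the XOR of the family is 1 exactly when an
odd number of the `x i` equal 1.  Then
`XOR_i x i = ∑_{∅ ≠ S ⊆ ι} (−1)^{|S|+1} 2^{|S|−1} ∏_{i∈S} x i`. -/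
theorem xor_inclusion_exclusion {ι : Type*} [Fintype ι] [DecidableEq ι]
    (x : ι → ℤ) (hx : ∀ i, x i = 0 ∨ x i = 1) :
    (if Odd (Finset.univ.filter (fun i => x i = 1)).card then (1 : ℤ) else 0) =
      ∑ S ∈ Finset.univ.powerset.filter (fun S : Finset ι => S ≠ ∅),
        (-1 : ℤ) ^ (S.card + 1) * 2 ^ (S.card - 1) * ∏ i ∈ S, x i := by
  refine mul_left_cancel₀ (two_ne_zero : (2 : ℤ) ≠ 0) ?_
  rw [two_mul_ite_odd, ← prod_one_sub_two_mul_of_bits univ fun i _ => hx i,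
    prod_one_sub_two_mul]
  ring
end

section
/- (Combinatorial core of Lemma 1: sufficiency of the transversal-phase-gate conditions.) Let q ≥ 1, and let H : Fin m → Fin n → ℤ and L : Fin k → Fin n → ℤ be families of vectors with all entries equal to 0 or 1 (the X-stabilizer generators and logical X generators), let p : Fin n → ℤ and w : Fin k → ℤ. Assume: (a) for every j, ∑_c L j c · p c ≡ w j (mod 2^q); and (b) for all subsets S ⊆ Fin m and T ⊆ Fin k with 1 ≤ |S| + |T| ≤ q and not (S = ∅ and |T| = 1), one has ∑_c (∏_{i∈S} H i c) · (∏_{j∈T} L j c) · p c ≡ 0 (mod 2^{q+1−|S|−|T|}). Then for all subsets S ⊆ Fin m and T ⊆ Fin k, ∑_c ((⊕_{i∈S} H i) ⊕ (⊕_{j∈T} L j))(c) · p c ≡ ∑_{j∈T} w j (mod 2^q), where ⊕ denotes coordinatewise XOR of 0/1 vectors. (This says the physical phase gate P_q^p induces the logical transversal phase gate P_{L,q}^w on every X-basis codeword.) -/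
/-!
For 0/1 values, `2 · (x₁ ⊕ ⋯ ⊕ x_r) = 1 - ∏ (1 - 2 xᵢ) = -∑_{∅ ≠ U} (-2)^{|U|} ∏_{i ∈ U} xᵢ`.
Weighting by `p` and summing over the coordinates expresses twice the `p`-weight of a codeword
through the `p`-weights of the coordinatewise products of its generators. The factor `(-2)^{|U|}`
turns condition (b) into a congruence modulo `2^{q+1}` for every `U` with `|U| ≥ 2`, while the
singletons contribute `-2` times their target phases modulo `2^{q+1}` (by (a), and by (b) with
target phase `0` for the rows of `H`); cancelling the factor `2` leaves the claim modulo `2^q`.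
-/

open Finset

theorem two_mul_ite_odd_eq_one_sub_neg_one_pow (n : ℕ) :
    2 * (if Odd n then 1 else 0 : ℤ) = 1 - (-1) ^ n := by
  rcases n.even_or_odd with h | h
  · rw [h.neg_one_pow, if_neg (Nat.not_odd_iff_even.mpr h)]; norm_num
  · rw [h.neg_one_pow, if_pos h]; norm_num

theorem prod_one_sub_two_mul_eq_neg_one_pow {ι : Type*} (s : Finset ι) {y : ι → ℤ}
    (hy : ∀ i, y i = 0 ∨ y i = 1) :
    ∏ i ∈ s, (1 - 2 * y i) = (-1) ^ #{i ∈ s | y i = 1} := by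
  rw [card_filter, ← prod_pow_eq_pow_sum]
  refine prod_congr rfl fun i _ => ?_
  rcases hy i with h | h <;> simp [h]

theorem prod_one_sub_two_mul_eq_sum_powerset {ι R : Type*} [CommRing R] (s : Finset ι)
    (y : ι → R) :
    ∏ i ∈ s, (1 - 2 * y i) = ∑ t ∈ s.powerset, (-2) ^ #t * ∏ i ∈ t, y i := by
  simp_rw [sub_eq_add_neg, ← neg_mul, prod_one_add, prod_mul_distrib, prod_const]

theorem card_filter_disjSum {α β : Type*} (s : Finset α) (t : Finset β) (P : α ⊕ β → Prop)
    [DecidablePred P] :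
    #{u ∈ s.disjSum t | P u} = #{a ∈ s | P (.inl a)} + #{b ∈ t | P (.inr b)} := by
  simp only [card_filter, sum_disjSum]

theorem neg_two_pow_mul_modEq_zero {a : ℤ} {j q : ℕ}
    (h : j ≤ q → a ≡ 0 [ZMOD 2 ^ (q + 1 - j)]) : (-2) ^ j * a ≡ 0 [ZMOD 2 ^ (q + 1)] := by
  rw [Int.modEq_zero_iff_dvd, neg_pow, mul_assoc]
  refine Dvd.dvd.mul_left ?_ _
  by_cases hj : j ≤ q
  · rw [show q + 1 = j + (q + 1 - j) by omega, pow_add]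
    exact mul_dvd_mul_left _ ((Int.modEq_zero_iff_dvd).mp (h hj))
  · exact (pow_dvd_pow 2 (by omega)).mul_right a

section Weights

variable {ι κ : Type*} [Fintype κ] (x : ι → κ → ℤ) (p : κ → ℤ)

def productWeight (U : Finset ι) : ℤ := ∑ c, (∏ u ∈ U, x u c) * p c

def xorWeight (R : Finset ι) : ℤ := ∑ c, (if Odd #{u ∈ R | x u c = 1} then 1 else 0) * p c

theorem productWeight_empty : productWeight x p ∅ = ∑ c, p c := by
  simp [productWeight]

variable {x}

theorem two_mul_xorWeight (hx : ∀ u c, x u c = 0 ∨ x u c = 1) (R : Finset ι) :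
    2 * xorWeight x p R
      = productWeight x p ∅ - ∑ t ∈ R.powerset, (-2) ^ #t * productWeight x p t := by
  calc 2 * xorWeight x p R
      = ∑ c, (1 - ∑ t ∈ R.powerset, (-2) ^ #t * ∏ u ∈ t, x u c) * p c := by
        rw [xorWeight, mul_sum]
        refine sum_congr rfl fun c _ => ?_
        rw [← mul_assoc, two_mul_ite_odd_eq_one_sub_neg_one_pow,
          ← prod_one_sub_two_mul_eq_neg_one_pow R (hx · c), prod_one_sub_two_mul_eq_sum_powerset]
    _ = _ := by
        simp_rw [productWeight_empty, productWeight, sub_mul, one_mul, sum_sub_distrib, sum_mul,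
          mul_sum, mul_assoc]
        rw [sum_comm]

variable {W : ι → ℤ} {q : ℕ}

theorem sum_powerset_neg_two_pow_mul_productWeight_modEq
    (h1 : ∀ u, productWeight x p {u} ≡ W u [ZMOD 2 ^ q])
    (h2 : ∀ U : Finset ι, 2 ≤ #U → #U ≤ q → productWeight x p U ≡ 0 [ZMOD 2 ^ (q + 1 - #U)])
    (R : Finset ι) :
    ∑ t ∈ R.powerset, (-2) ^ #t * productWeight x p t
      ≡ productWeight x p ∅ - 2 * ∑ u ∈ R, W u [ZMOD 2 ^ (q + 1)] := by
  rcases R.eq_empty_or_nonempty with rfl | hR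
  · simp [Int.ModEq.refl]
  obtain ⟨r, hr⟩ := Nat.exists_eq_succ_of_ne_zero hR.card_pos.ne'
  have high : ∑ j ∈ range r, ∑ t ∈ powersetCard (j + 1 + 1) R, (-2) ^ #t * productWeight x p t
      ≡ 0 [ZMOD 2 ^ (q + 1)] :=
    Int.ModEq.sum_zero fun j _ => Int.ModEq.sum_zero fun t ht => by
      have hcard := (mem_powersetCard.mp ht).2
      exact neg_two_pow_mul_modEq_zero (h2 t (by omega))
  have singletons :
      ∑ u ∈ R, 2 * productWeight x p {u} ≡ 2 * ∑ u ∈ R, W u [ZMOD 2 ^ (q + 1)] := by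
    rw [mul_sum, pow_succ']
    exact Int.ModEq.sum fun u _ => (h1 u).mul_left'
  rw [sum_powerset, hr, sum_range_succ', sum_range_succ']
  simpa [powersetCard_one, sub_eq_add_neg, add_comm] using
    (high.add singletons.neg).add_right (productWeight x p ∅)

theorem xorWeight_modEq (hx : ∀ u c, x u c = 0 ∨ x u c = 1)
    (h1 : ∀ u, productWeight x p {u} ≡ W u [ZMOD 2 ^ q])
    (h2 : ∀ U : Finset ι, 2 ≤ #U → #U ≤ q → productWeight x p U ≡ 0 [ZMOD 2 ^ (q + 1 - #U)])
    (R : Finset ι) : xorWeight x p R ≡ ∑ u ∈ R, W u [ZMOD 2 ^ q] := by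
  refine Int.ModEq.mul_left_cancel' two_ne_zero ?_
  rw [← pow_succ', two_mul_xorWeight p hx R]
  simpa using (Int.ModEq.refl (productWeight x p ∅)).sub
    (sum_powerset_neg_two_pow_mul_productWeight_modEq p h1 h2 R)

end Weights

/-- **Sufficiency of the transversal-phase-gate conditions (combinatorial core of Lemma 1).**
`H` are the X-stabilizer generators, `L` the logical X generators (bit strings as 0/1
integer vectors), `p` the physical phase pattern and `w` the target logical phases.
Conditions (a) and (b) imply that every X-basis codeword — the coordinatewise XOR of a
subset `S` of rows of `H` and a subset `T` of rows of `L` — has `p`-weighted weight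
congruent to `∑_{j∈T} w j` modulo `2^q`. -/
theorem transversal_phase_gate_sufficient
    (q m k n : ℕ) (hq : 1 ≤ q)
    (H : Fin m → Fin n → ℤ) (L : Fin k → Fin n → ℤ)
    (hH : ∀ i c, H i c = 0 ∨ H i c = 1) (hL : ∀ j c, L j c = 0 ∨ L j c = 1)
    (p : Fin n → ℤ) (w : Fin k → ℤ)
    (ha : ∀ j, (∑ c, L j c * p c) ≡ w j [ZMOD (2 : ℤ) ^ q])
    (hb : ∀ (S : Finset (Fin m)) (T : Finset (Fin k)),
      1 ≤ S.card + T.card → S.card + T.card ≤ q → ¬(S = ∅ ∧ T.card = 1) →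
      (∑ c, (∏ i ∈ S, H i c) * (∏ j ∈ T, L j c) * p c)
        ≡ 0 [ZMOD (2 : ℤ) ^ (q + 1 - S.card - T.card)]) :
    ∀ (S : Finset (Fin m)) (T : Finset (Fin k)),
      (∑ c, (if Odd ((S.filter (fun i => H i c = 1)).card
                      + (T.filter (fun j => L j c = 1)).card)
              then (1 : ℤ) else 0) * p c)
        ≡ (∑ j ∈ T, w j) [ZMOD (2 : ℤ) ^ q] := by
  intro S T
  have hx : ∀ u c, Sum.elim H L u c = 0 ∨ Sum.elim H L u c = 1 := by
    rintro (i | j) c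
    exacts [hH i c, hL j c]
  have h1 : ∀ u, productWeight (Sum.elim H L) p {u} ≡ Sum.elim 0 w u [ZMOD 2 ^ q] := by
    rintro (i | j)
    · simpa [productWeight] using hb {i} ∅ (by simp) (by simpa using hq) (by simp)
    · simpa [productWeight] using ha j
  have h2 : ∀ U : Finset (Fin m ⊕ Fin k), 2 ≤ #U → #U ≤ q →
      productWeight (Sum.elim H L) p U ≡ 0 [ZMOD 2 ^ (q + 1 - #U)] := by
    intro U hU hUq
    rw [← card_toLeft_add_card_toRight] at hU hUq ⊢
    simpa [productWeight, prod_sum_eq_prod_toLeft_mul_prod_toRight, Nat.sub_sub] using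
      hb U.toLeft U.toRight (by omega) hUq fun ⟨hS, _⟩ => by
        simp only [hS, card_empty] at hU; omega
  have codeword := xorWeight_modEq p hx h1 h2 (S.disjSum T)
  simp only [xorWeight, card_filter_disjSum, Sum.elim_inl, Sum.elim_inr, sum_disjSum,
    Pi.zero_apply, sum_const_zero, zero_add] at codeword
  exact codeword
end

section
/- (The Steane code has no transversal T.) Let r₁ = (1,0,0,1,0,1,1), r₂ = (0,1,0,1,1,0,1), r₃ = (0,0,1,0,1,1,1) and l = (1,1,1,1,1,1,1), regarded as 0/1 vectors in ℤ^7, and for u ∈ {0,1}³, v ∈ {0,1} let c(u,v) ∈ {0,1}^7 ⊂ ℤ^7 denote the coordinatewise XOR v·l ⊕ u₁r₁ ⊕ u₂r₂ ⊕ u₃r₃. Then there exist no p : Fin 7 → ℤ and odd integer w such that for all u ∈ {0,1}³ and v ∈ {0,1}, ∑_{c} c(u,v)(c) · p(c) ≡ v·w (mod 8). -/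
/-!
Every coordinate lies in exactly four of the eight codewords `c(u, 0)`, so summing the
eight congruences `∑_c c(u,0)(c)·p(c) ≡ 0 (mod 8)` gives `4·∑_c p(c) ≡ 0 (mod 8)`, i.e.
`∑_c p(c)` is even. But `c(0, 1)` is the all-ones word, so `∑_c p(c) ≡ w (mod 8)` is odd.
-/

theorem dvd_mul_sum_of_forall_column_sum_eq {R ι κ : Type*} [CommSemiring R]
    [Fintype ι] [Fintype κ] {n m : R} (a : ι → κ → R) (p : κ → R)
    (hcol : ∀ c, ∑ i, a i c = m) (hrow : ∀ i, n ∣ ∑ c, a i c * p c) :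
    n ∣ m * ∑ c, p c := by
  have hcount : ∑ i, ∑ c, a i c * p c = m * ∑ c, p c := by
    rw [Finset.sum_comm, Finset.mul_sum]
    exact Finset.sum_congr rfl fun c _ => by rw [← Finset.sum_mul, hcol]
  exact hcount ▸ Finset.dvd_sum fun i _ => hrow i

/-- The codeword `c(u, v)`. -/
def steaneWord (u : Fin 3 → ℤ) (v : ℤ) : Fin 7 → ℤ := fun c =>
  if Odd (v * (![1,1,1,1,1,1,1] : Fin 7 → ℤ) c
      + u 0 * (![1,0,0,1,0,1,1] : Fin 7 → ℤ) c
      + u 1 * (![0,1,0,1,1,0,1] : Fin 7 → ℤ) c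
      + u 2 * (![0,0,1,0,1,1,1] : Fin 7 → ℤ) c)
  then 1 else 0

theorem steaneWord_zero_one : steaneWord 0 1 = fun _ => 1 := by
  funext c
  fin_cases c <;> decide

theorem sum_steaneWord_zero_apply (c : Fin 7) :
    ∑ u : Fin 3 → Fin 2, steaneWord (fun i => u i) 0 c = 4 := by
  fin_cases c <;> decide

/-- **The Steane code has no transversal `T`.**
Bit strings are 0/1 valued integer vectors; the codeword `c(u,v)` is the coordinatewise
XOR `v·l ⊕ u₁r₁ ⊕ u₂r₂ ⊕ u₃r₃` (its coordinate is 1 exactly when an odd number of the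
contributing bits are 1).  There is no phase pattern `p : Fin 7 → ℤ` and odd `w` with
`∑_c c(u,v)(c)·p(c) ≡ v·w (mod 8)` for all `u ∈ {0,1}³`, `v ∈ {0,1}`. -/
theorem steane_no_transversal_T :
    ¬ ∃ (p : Fin 7 → ℤ) (w : ℤ), Odd w ∧
      ∀ (u : Fin 3 → ℤ) (v : ℤ), (∀ i, u i = 0 ∨ u i = 1) → (v = 0 ∨ v = 1) →
        (∑ c, (if Odd (v * (![1,1,1,1,1,1,1] : Fin 7 → ℤ) c
                        + u 0 * (![1,0,0,1,0,1,1] : Fin 7 → ℤ) c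
                        + u 1 * (![0,1,0,1,1,0,1] : Fin 7 → ℤ) c
                        + u 2 * (![0,0,1,0,1,1,1] : Fin 7 → ℤ) c)
                then (1 : ℤ) else 0) * p c) ≡ v * w [ZMOD 8] := by
  rintro ⟨p, w, ⟨k, rfl⟩, h⟩
  have hcode : ∀ u v, (∀ i, u i = 0 ∨ u i = 1) → (v = 0 ∨ v = 1) →
      ∑ c, steaneWord u v c * p c ≡ v * (2 * k + 1) [ZMOD 8] := h
  have heven : (8 : ℤ) ∣ 4 * ∑ c, p c := by
    refine dvd_mul_sum_of_forall_column_sum_eq _ p sum_steaneWord_zero_apply fun u => ?_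
    have hbit : ∀ i, ((u i : ℕ) : ℤ) = 0 ∨ ((u i : ℕ) : ℤ) = 1 := fun i => by omega
    exact Int.modEq_zero_iff_dvd.1 (by simpa using hcode _ 0 hbit (Or.inl rfl))
  have hodd : ∑ c, p c ≡ 2 * k + 1 [ZMOD 8] := by
    simpa [steaneWord_zero_one] using hcode 0 1 (by simp) (Or.inr rfl)
  rw [Int.ModEq] at hodd
  omega
end

section
/- (Circuit identity of Lemma 4: localising a controlled-phase gate.) Let ω ∈ ℂ with ω ≠ 0. Let CNOT : Matrix (Fin 2 × Fin 2) (Fin 2 × Fin 2) ℂ be the controlled-NOT with the first factor as control, let P(ζ) = !![1,0;0,ζ], I₂ the 2×2 identity, ⊗ the Kronecker product of matrices, and CZ(ζ) the diagonal 4×4 matrix which is 1 except for entry ζ at index ((1,1),(1,1)). Then (I₂ ⊗ P(ω)) * CNOT * (I₂ ⊗ P(ω⁻¹)) * CNOT = (P(ω⁻¹) ⊗ I₂) * CZ(ω²). That is, the sequence CNOT, P† on the target, CNOT, P on the target implements a controlled-P² gate up to a P† on the control qubit. -/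
/-!
`CNOT` is the permutation matrix of the shear `(a, c) ↦ (a, c + a)`, so conjugating a diagonal
gate by it just permutes the diagonal. Hence both sides of the identity are diagonal, and it
remains to compare four diagonal entries.
-/

open Matrix Kronecker

/-- The controlled-NOT gate on two qubits (first factor = control):
`CNOT (a,c) (a',c') = 1` iff `a = a'` and `c = c' + a` (addition in `Fin 2`). -/
def CNOT : Matrix (Fin 2 × Fin 2) (Fin 2 × Fin 2) ℂ :=
  Matrix.of fun p q => if p.1 = q.1 ∧ p.2 = q.2 + p.1 then 1 else 0

/-- The controlled-phase gate `CZ(ζ)`: diagonal, equal to 1 except for the entry `ζ`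
at index `((1,1),(1,1))`. -/
def CZ (ζ : ℂ) : Matrix (Fin 2 × Fin 2) (Fin 2 × Fin 2) ℂ :=
  Matrix.of fun p q => if p = q then (if p = ((1 : Fin 2), (1 : Fin 2)) then ζ else 1) else 0

namespace Matrix

variable {m n α : Type*}

theorem toMatrix_toPEquiv_mul_diagonal_mul_symm [Fintype m] [DecidableEq m] [NonAssocSemiring α]
    (σ : m ≃ m) (d : m → α) :
    σ.toPEquiv.toMatrix * diagonal d * σ.symm.toPEquiv.toMatrix = diagonal (d ∘ σ) := by
  rw [PEquiv.toMatrix_toPEquiv_mul, PEquiv.mul_toMatrix_toPEquiv, Equiv.symm_symm,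
    submatrix_submatrix, Function.comp_id, Function.id_comp, submatrix_diagonal_equiv]

theorem one_kronecker_diagonal [MulZeroOneClass α] [DecidableEq m] [DecidableEq n] (d : n → α) :
    (1 : Matrix m m α) ⊗ₖ diagonal d = diagonal fun p => d p.2 := by
  rw [← diagonal_one, diagonal_kronecker_diagonal]
  simp only [one_mul]

theorem diagonal_kronecker_one [MulZeroOneClass α] [DecidableEq m] [DecidableEq n] (d : m → α) :
    diagonal d ⊗ₖ (1 : Matrix n n α) = diagonal fun p => d p.1 := by
  rw [← diagonal_one, diagonal_kronecker_diagonal]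
  simp only [mul_one]

end Matrix

def cnotPerm : Equiv.Perm (Fin 2 × Fin 2) :=
  Equiv.prodShear (Equiv.refl _) fun a => Equiv.addRight a

theorem cnotPerm_symm : cnotPerm.symm = cnotPerm := by
  ext ⟨a, c⟩ <;> fin_cases a <;> fin_cases c <;> rfl

theorem CNOT_eq_toMatrix_cnotPerm : CNOT = cnotPerm.toPEquiv.toMatrix := by
  ext ⟨a, c⟩ ⟨a', c'⟩
  fin_cases a <;> fin_cases c <;> fin_cases a' <;> fin_cases c' <;> rfl

theorem CNOT_mul_diagonal_mul_CNOT (d : Fin 2 × Fin 2 → ℂ) :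
    CNOT * diagonal d * CNOT = diagonal fun p => d (p.1, p.2 + p.1) := by
  conv_lhs => rw [CNOT_eq_toMatrix_cnotPerm]; arg 2; rw [← cnotPerm_symm]
  exact toMatrix_toPEquiv_mul_diagonal_mul_symm cnotPerm d

theorem CZ_eq_diagonal (ζ : ℂ) :
    CZ ζ = diagonal fun p => if p = ((1 : Fin 2), (1 : Fin 2)) then ζ else 1 :=
  rfl

/-- **Circuit identity of Lemma 4: localising a controlled-phase gate.**
For `ω ≠ 0`, with `P(ζ) = !![1,0;0,ζ]`:
`(I ⊗ P(ω)) · CNOT · (I ⊗ P(ω⁻¹)) · CNOT = (P(ω⁻¹) ⊗ I) · CZ(ω²)`;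
the sequence CNOT, `P†` on the target, CNOT, `P` on the target implements a
controlled-`P²` gate up to a `P†` on the control. -/
theorem controlled_phase_localisation (ω : ℂ) (hω : ω ≠ 0) :
    ((1 : Matrix (Fin 2) (Fin 2) ℂ) ⊗ₖ (!![1,0;0,ω] : Matrix (Fin 2) (Fin 2) ℂ)) * CNOT *
      ((1 : Matrix (Fin 2) (Fin 2) ℂ) ⊗ₖ (!![1,0;0,ω⁻¹] : Matrix (Fin 2) (Fin 2) ℂ)) * CNOT
    = ((!![1,0;0,ω⁻¹] : Matrix (Fin 2) (Fin 2) ℂ) ⊗ₖ (1 : Matrix (Fin 2) (Fin 2) ℂ)) *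
        CZ (ω ^ 2) := by
  rw [Matrix.mul_assoc, Matrix.mul_assoc, ← Matrix.mul_assoc CNOT]
  simp only [← diagonal_vec2, one_kronecker_diagonal, diagonal_kronecker_one, CZ_eq_diagonal,
    CNOT_mul_diagonal_mul_CNOT, diagonal_mul_diagonal]
  congr 1
  funext ⟨a, c⟩
  fin_cases a <;> fin_cases c <;> simp [hω, pow_two]
end

section
/- (Parity computation underlying the intra-block controlled-phase lemma.) Let n be a natural number, σ a permutation of Fin n, and r, l₁, l₂ : Fin n → ZMod 2, and set y = r ∘ σ, i.e., y is the image of r under the permutation S_R. Assume: (i) l₂ = l₁ ∘ σ and l₁ = l₂ ∘ σ (σ swaps the two logicals); (ii) l₁ and l₂ have disjoint supports, i.e., l₁ c * l₂ c = 0 for all c; (iii) the cardinalities of {c | y c = 1 ∧ l₂ c = 1}, {c | r c = 1 ∧ l₂ c = 1}, and {c | r c = 1 ∧ y c = 1 ∧ l₂ c = 1} are all even. Then, writing z = r + l₁ + l₂ (sum in (ZMod 2)^n), the cardinality of {c | (z ∘ σ) c = 1 ∧ z c = 1 ∧ l₂ c = 1} is congruent modulo 2 to the cardinality of {c | l₂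 c = 1}. (Hence applying controlled-Z gates between the qubit pairs paired by σ inside the support of l₁ ∪ l₂ gives the codeword r ⊕ l₁ ⊕ l₂ the phase (−1)^{|l₂|} while codewords r, r ⊕ l₁, r ⊕ l₂ acquire no phase.) -/
/-!
On the support of `l₂` the logical `l₁` vanishes while `l₁ ∘ σ` equals one and `l₂ ∘ σ`
vanishes, so there `z = r + 1` and `z ∘ σ = r ∘ σ + 1`. Hence, inside that support, the
coordinates counted are exactly those where neither `r` nor `r ∘ σ` equals one, and by
inclusion–exclusion their number differs from `|l₂|` by the even number
`|r·l₂| + |(r∘σ)·l₂| - |r·(r∘σ)·l₂|`.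
-/

open Finset

theorem card_filter_not_and_not_and_modEq_two {α : Type*} [Fintype α] (p q t : α → Prop)
    [DecidablePred p] [DecidablePred q] [DecidablePred t]
    (hp : Even #{a | p a ∧ t a}) (hq : Even #{a | q a ∧ t a})
    (hpq : Even #{a | p a ∧ q a ∧ t a}) :
    #{a | ¬p a ∧ ¬q a ∧ t a} ≡ #{a | t a} [MOD 2] := by
  classical
  set P : Finset α := {a | p a ∧ t a}
  set Q : Finset α := {a | q a ∧ t a}
  set T : Finset α := {a | t a}
  have hsdiff : ({a | ¬p a ∧ ¬q a ∧ t a} : Finset α) = T \ (P ∪ Q) := by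
    ext a; simp only [P, Q, T, mem_filter, mem_univ, true_and, mem_sdiff, mem_union]; tauto
  have hinter : P ∩ Q = ({a | p a ∧ q a ∧ t a} : Finset α) := by
    ext a; simp only [P, Q, mem_filter, mem_univ, true_and, mem_inter]; tauto
  have hsub : P ∪ Q ⊆ T := by
    intro a; simp only [P, Q, T, mem_filter, mem_univ, true_and, mem_union]; tauto
  have hsplit := card_sdiff_add_card_eq_card hsub
  have hincl := card_union_add_card_inter P Q
  rw [← hsdiff] at hsplit
  rw [hinter] at hincl
  obtain ⟨i, hi⟩ := hp
  obtain ⟨j, hj⟩ := hq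
  obtain ⟨k, hk⟩ := hpq
  unfold Nat.ModEq
  omega

theorem zmod_two_ne_one_iff (a : ZMod 2) : a ≠ 1 ↔ a = 0 := by
  revert a; decide

theorem comp_add_add_eq_one_and_iff {α : Type*} (σ : Equiv.Perm α) (r l₁ l₂ : α → ZMod 2)
    (h12 : l₂ = l₁ ∘ σ) (hdisj : ∀ c, l₁ c * l₂ c = 0) (c : α) :
    (((r + l₁ + l₂) ∘ σ) c = 1 ∧ (r + l₁ + l₂) c = 1 ∧ l₂ c = 1) ↔
      (¬r c = 1 ∧ ¬(r ∘ σ) c = 1 ∧ l₂ c = 1) := by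
  by_cases hc : l₂ c = 1
  · have hl₁ : l₁ c = 0 := by simpa [hc] using hdisj c
    have hl₁σ : l₁ (σ c) = 1 := hc ▸ (congrFun h12 c).symm
    have hl₂σ : l₂ (σ c) = 0 := by simpa [hl₁σ] using hdisj (σ c)
    simp [hc, hl₁, hl₁σ, hl₂σ, zmod_two_ne_one_iff, and_comm]
  · simp [hc]

theorem intra_block_controlled_phase_parity_general
    (n : ℕ) (σ : Equiv.Perm (Fin n)) (r l₁ l₂ : Fin n → ZMod 2)
    (h12 : l₂ = l₁ ∘ σ)
    (hdisj : ∀ c, l₁ c * l₂ c = 0)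
    (he1 : Even (Finset.univ.filter (fun c => (r ∘ σ) c = 1 ∧ l₂ c = 1)).card)
    (he2 : Even (Finset.univ.filter (fun c => r c = 1 ∧ l₂ c = 1)).card)
    (he3 : Even (Finset.univ.filter
      (fun c => r c = 1 ∧ (r ∘ σ) c = 1 ∧ l₂ c = 1)).card) :
    (Finset.univ.filter (fun c =>
        ((r + l₁ + l₂) ∘ σ) c = 1 ∧ (r + l₁ + l₂) c = 1 ∧ l₂ c = 1)).card ≡
      (Finset.univ.filter (fun c => l₂ c = 1)).card [MOD 2] := by
  rw [filter_congr fun c _ => comp_add_add_eq_one_and_iff σ r l₁ l₂ h12 hdisj c]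
  exact card_filter_not_and_not_and_modEq_two _ _ _ he2 he1 he3

/-- **Parity computation underlying the intra-block controlled-phase lemma.**
`σ` is a qubit permutation carrying codewords to codewords (`y = r ∘ σ`), swapping the
disjointly-supported logicals `l₁, l₂`.  Under the evenness conditions (instances of the
transversal-`T` conditions), the codeword `z = r + l₁ + l₂` satisfies
`|{c | (z∘σ) c = 1 ∧ z c = 1 ∧ l₂ c = 1}| ≡ |{c | l₂ c = 1}| (mod 2)`. -/
theorem intra_block_controlled_phase_parity
    (n : ℕ) (σ : Equiv.Perm (Fin n)) (r l₁ l₂ : Fin n → ZMod 2)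
    (h12 : l₂ = l₁ ∘ σ) (h21 : l₁ = l₂ ∘ σ)
    (hdisj : ∀ c, l₁ c * l₂ c = 0)
    (he1 : Even (Finset.univ.filter (fun c => (r ∘ σ) c = 1 ∧ l₂ c = 1)).card)
    (he2 : Even (Finset.univ.filter (fun c => r c = 1 ∧ l₂ c = 1)).card)
    (he3 : Even (Finset.univ.filter
      (fun c => r c = 1 ∧ (r ∘ σ) c = 1 ∧ l₂ c = 1)).card) :
    (Finset.univ.filter (fun c =>
        ((r + l₁ + l₂) ∘ σ) c = 1 ∧ (r + l₁ + l₂) c = 1 ∧ l₂ c = 1)).card ≡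
      (Finset.univ.filter (fun c => l₂ c = 1)).card [MOD 2] :=
  intra_block_controlled_phase_parity_general n σ r l₁ l₂ h12 hdisj he1 he2 he3
end

section
/- (Logical qubit count of the hypergraph product.) Let A be an m_A × n_A matrix and B an m_B × n_B matrix over ZMod 2, with rank A = m_A and rank B = m_B (i.e., Aᵀ and Bᵀ are full rank). Let H_X be the (m_A·n_B) × (n_A·n_B + m_A·m_B) block matrix [A⊗1_{n_B} | 1_{m_A}⊗Bᵀ] and H_Z the (n_A·m_B) × (n_A·n_B + m_A·m_B) block matrix [1_{n_A}⊗B | Aᵀ⊗1_{m_B}], over ZMod 2. Then (n_A·n_B + m_A·m_B) − rank H_X − rank H_Z = (n_A − m_A)·(n_B − m_B). -/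
/-!
Full row rank of `A` and `B` gives right inverses `A * C = 1` and `B * D = 1`, hence right
inverses `C ⊗ 1` of `A ⊗ 1` and `1 ⊗ D` of `1 ⊗ B`. So the left blocks of `H_X` and `H_Z`, and
therefore `H_X` and `H_Z` themselves, have full row rank `m_A n_B` and `n_A m_B`, and
`n_A n_B + m_A m_B - m_A n_B - n_A m_B = (n_A - m_A)(n_B - m_B)`.
-/

open Matrix Kronecker

namespace Matrix

variable {R K : Type*} {l m n p q : Type*} [Fintype m] [Fintype n]

theorem rank_eq_card_height_of_mul_eq_one [CommSemiring R] [StrongRankCondition R]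
    [DecidableEq m] {A : Matrix m n R} {C : Matrix n m R} (h : A * C = 1) :
    A.rank = Fintype.card m :=
  le_antisymm A.rank_le_card_height <| by
    simpa [h, rank_one] using rank_mul_le_left A C

theorem exists_mul_eq_one_of_rank_eq_card_height [Field K] [DecidableEq m] [DecidableEq n]
    {A : Matrix m n K} (h : A.rank = Fintype.card m) : ∃ C : Matrix n m K, A * C = 1 := by
  have hrange : LinearMap.range A.mulVecLin = ⊤ :=
    Submodule.eq_top_of_finrank_eq (by rw [← rank, h, Module.finrank_fintype_fun_eq_card])
  obtain ⟨g, hg⟩ := A.mulVecLin.exists_rightInverse_of_surjective hrange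
  refine ⟨LinearMap.toMatrix' g, toLin'.injective ?_⟩
  rw [toLin'_mul, toLin'_toMatrix', toLin'_apply', hg, toLin'_one]

theorem rank_kronecker_of_mul_eq_one [CommSemiring R] [StrongRankCondition R] [Fintype p]
    [Fintype q] [DecidableEq m] [DecidableEq p] {A : Matrix m n R} {C : Matrix n m R}
    {B : Matrix p q R} {D : Matrix q p R} (hA : A * C = 1) (hB : B * D = 1) :
    (A ⊗ₖ B).rank = Fintype.card (m × p) :=
  rank_eq_card_height_of_mul_eq_one (C := C ⊗ₖ D) <| by
    rw [← mul_kronecker_mul, hA, hB, one_kronecker_one]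

theorem rank_fromCols_of_rank_eq_card_height [CommSemiring R] [StrongRankCondition R]
    [Fintype l] [DecidableEq n] {M : Matrix m n R} (N : Matrix m l R)
    (hM : M.rank = Fintype.card m) : (fromCols M N).rank = Fintype.card m :=
  le_antisymm (rank_le_card_height _) <| calc
    Fintype.card m = rank (fromCols M N * fromRows 1 0 : Matrix m n R) := by
      rw [fromCols_mul_fromRows, Matrix.mul_one, Matrix.mul_zero, add_zero, hM]
    _ ≤ (fromCols M N).rank := rank_mul_le_left _ _

end Matrix

theorem Nat.mul_add_mul_sub_mul_sub_mul {a b c d : ℕ} (hab : a ≤ b) (hcd : c ≤ d) :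
    b * d + a * c - a * d - b * c = (b - a) * (d - c) := by
  obtain ⟨x, rfl⟩ := Nat.exists_eq_add_of_le hab
  obtain ⟨y, rfl⟩ := Nat.exists_eq_add_of_le hcd
  rw [show (a + x) * (c + y) + a * c = a * (c + y) + ((a + x) * c + x * y) by ring]
  simp

/-- **Logical qubit count of the hypergraph product.**
If `Aᵀ` and `Bᵀ` are full rank (`rank A = m_A`, `rank B = m_B`), then the hypergraph
product code on `n_A n_B + m_A m_B` qubits, with `H_X = [A⊗1 | 1⊗Bᵀ]` and
`H_Z = [1⊗B | Aᵀ⊗1]`, encodes `K = N − rank H_X − rank H_Z = (n_A − m_A)(n_B − m_B)`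
logical qubits. -/
theorem hypergraph_product_logical_count
    (mA nA mB nB : ℕ)
    (A : Matrix (Fin mA) (Fin nA) (ZMod 2)) (B : Matrix (Fin mB) (Fin nB) (ZMod 2))
    (hA : A.rank = mA) (hB : B.rank = mB) :
    nA * nB + mA * mB
      - (Matrix.fromCols (A ⊗ₖ (1 : Matrix (Fin nB) (Fin nB) (ZMod 2)))
          ((1 : Matrix (Fin mA) (Fin mA) (ZMod 2)) ⊗ₖ Bᵀ)).rank
      - (Matrix.fromCols ((1 : Matrix (Fin nA) (Fin nA) (ZMod 2)) ⊗ₖ B)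
          (Aᵀ ⊗ₖ (1 : Matrix (Fin mB) (Fin mB) (ZMod 2)))).rank
      = (nA - mA) * (nB - mB) := by
  obtain ⟨C, hC⟩ := exists_mul_eq_one_of_rank_eq_card_height (A := A) (by simpa using hA)
  obtain ⟨D, hD⟩ := exists_mul_eq_one_of_rank_eq_card_height (A := B) (by simpa using hB)
  have hX := rank_fromCols_of_rank_eq_card_height ((1 : Matrix (Fin mA) (Fin mA) _) ⊗ₖ Bᵀ)
    (rank_kronecker_of_mul_eq_one hC (mul_one (1 : Matrix (Fin nB) (Fin nB) (ZMod 2))))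
  have hZ := rank_fromCols_of_rank_eq_card_height (Aᵀ ⊗ₖ (1 : Matrix (Fin mB) (Fin mB) _))
    (rank_kronecker_of_mul_eq_one (mul_one (1 : Matrix (Fin nA) (Fin nA) (ZMod 2))) hD)
  simp only [Fintype.card_prod, Fintype.card_fin] at hX hZ
  rw [hX, hZ]
  exact Nat.mul_add_mul_sub_mul_sub_mul (hA ▸ A.rank_le_width) (hB ▸ B.rank_le_width)
end

section
/- (Balanced product codes are CSS codes.) Let A, R, C be matrices over ZMod 2 with A of size m × n, R of size m × m, C of size n × n, satisfying the symmetry relation R * A = A * Cᵀ. Then the balanced product parity-check matrices H_X = [Aᵀ | 1_n + C] and H_Z = [1_m + R | A] satisfy H_X * H_Zᵀ = 0; equivalently, Aᵀ * (1_m + R)ᵀ + (1_n + C) * Aᵀ = 0 over ZMod 2. -/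
/-!
Transposing the symmetry `R A = A Cᵀ` gives `Aᵀ Rᵀ = C Aᵀ`, so both blocks of `H_X H_Zᵀ`
equal `(1 + C) Aᵀ`; over `ZMod 2` their sum vanishes.
-/

open Matrix

namespace Matrix

variable {k l m n α : Type*}

theorem transpose_mul_one_add_transpose_eq_one_add_mul_transpose [Fintype m] [Fintype n]
    [DecidableEq m] [DecidableEq n] [CommSemiring α]
    {A : Matrix m n α} {R : Matrix m m α} {C : Matrix n n α} (hsym : R * A = A * Cᵀ) :
    Aᵀ * (1 + R)ᵀ = (1 + C) * Aᵀ := by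
  rw [transpose_add, transpose_one, Matrix.mul_add, Matrix.add_mul, Matrix.mul_one,
    Matrix.one_mul, ← transpose_mul, hsym, transpose_mul, transpose_transpose]

theorem add_self_eq_zero_of_charTwo [Ring α] [CharP α 2] (X : Matrix m n α) : X + X = 0 := by
  ext i j
  exact CharTwo.add_self_eq_zero (X i j)

theorem fromCols_mul_transpose_fromCols [Fintype m] [Fintype n] [Semiring α]
    (P : Matrix k m α) (Q : Matrix k n α) (S : Matrix l m α) (T : Matrix l n α) :
    fromCols P Q * (fromCols S T)ᵀ = P * Sᵀ + Q * Tᵀ := by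
  rw [transpose_fromCols, fromCols_mul_fromRows]

end Matrix

/-- **Balanced product codes are CSS codes.**
For `A : m × n`, `R : m × m`, `C : n × n` over `ZMod 2` with the symmetry `R A = A Cᵀ`,
the balanced product parity-check matrices `H_X = [Aᵀ | 1 + C]` and `H_Z = [1 + R | A]`
satisfy `H_X H_Zᵀ = 0`; equivalently `Aᵀ(1 + R)ᵀ + (1 + C)Aᵀ = 0`. -/
theorem balanced_product_css
    (m n : ℕ) (A : Matrix (Fin m) (Fin n) (ZMod 2))
    (R : Matrix (Fin m) (Fin m) (ZMod 2)) (C : Matrix (Fin n) (Fin n) (ZMod 2))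
    (hsym : R * A = A * Cᵀ) :
    Matrix.fromCols Aᵀ (1 + C) * (Matrix.fromCols (1 + R) A)ᵀ = 0 ∧
    Aᵀ * (1 + R)ᵀ + (1 + C) * Aᵀ = 0 := by
  have hcss : Aᵀ * (1 + R)ᵀ + (1 + C) * Aᵀ = 0 := by
    rw [transpose_mul_one_add_transpose_eq_one_add_mul_transpose hsym]
    exact add_self_eq_zero_of_charTwo _
  exact ⟨(fromCols_mul_transpose_fromCols _ _ _ _).trans hcss, hcss⟩
end

section
/- (Distance balancing preserves the CSS condition.) Let H_X, H_Z be matrices over ZMod 2 with n columns each, satisfying H_X * H_Zᵀ = 0, and let H_c be any m_c × n_c matrix over ZMod 2. Define the distance-balanced matrices H̃_X = [H_X⊗1_{n_c} | 1_n⊗H_cᵀ] (one block row) and H̃_Z as the block matrix with rows [H_Z⊗1_{n_c} | 0] and [1_n⊗H_c | H_Xᵀ⊗1_{m_c}]. Then H̃_X * H̃_Zᵀ = 0 over ZMod 2. -/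
open Matrix Kronecker

/-! The two block columns of `H̃_X` hit the transposed block rows of `H̃_Z` in
`(H_X ⊗ 1)(H_Zᵀ ⊗ 1) = (H_X H_Zᵀ) ⊗ 1`, which vanishes by the CSS condition on `(H_X, H_Z)`, and in
`(H_X ⊗ 1)(1 ⊗ H_cᵀ) + (1 ⊗ H_cᵀ)(H_X ⊗ 1) = 2 (H_X ⊗ H_cᵀ)`, which vanishes in characteristic 2. -/

namespace Matrix

variable {R l m p q : Type*} [CommSemiring R]

theorem kronecker_one_mul_one_kronecker [Fintype m] [Fintype p] [DecidableEq m] [DecidableEq p]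
    (A : Matrix l m R) (B : Matrix p q R) :
    A ⊗ₖ (1 : Matrix p p R) * (1 : Matrix m m R) ⊗ₖ B = A ⊗ₖ B := by
  rw [← mul_kronecker_mul, Matrix.mul_one, Matrix.one_mul]

theorem one_kronecker_mul_kronecker_one [Fintype l] [Fintype q] [DecidableEq l] [DecidableEq q]
    (A : Matrix l m R) (B : Matrix p q R) :
    (1 : Matrix l l R) ⊗ₖ B * A ⊗ₖ (1 : Matrix q q R) = A ⊗ₖ B := by
  rw [← mul_kronecker_mul, Matrix.one_mul, Matrix.mul_one]

end Matrix

theorem distanceBalanced_mul_transpose {R n mX mZ mc nc : Type*} [CommSemiring R]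
    [Fintype n] [Fintype mX] [Fintype mc] [Fintype nc]
    [DecidableEq n] [DecidableEq mX] [DecidableEq mc] [DecidableEq nc]
    (HX : Matrix mX n R) (HZ : Matrix mZ n R) (Hc : Matrix mc nc R) :
    fromCols (HX ⊗ₖ (1 : Matrix nc nc R)) ((1 : Matrix mX mX R) ⊗ₖ Hcᵀ) *
        (fromBlocks (HZ ⊗ₖ (1 : Matrix nc nc R)) 0 ((1 : Matrix n n R) ⊗ₖ Hc)
          (HXᵀ ⊗ₖ (1 : Matrix mc mc R)))ᵀ =
      fromCols ((HX * HZᵀ) ⊗ₖ (1 : Matrix nc nc R)) (HX ⊗ₖ Hcᵀ + HX ⊗ₖ Hcᵀ) := by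
  rw [fromBlocks_transpose, fromCols_mul_fromBlocks, transpose_zero, Matrix.mul_zero, add_zero]
  simp only [← kroneckerMap_transpose, transpose_one, transpose_transpose]
  rw [← mul_kronecker_mul, Matrix.mul_one, kronecker_one_mul_one_kronecker,
    one_kronecker_mul_kronecker_one]

/-- **Distance balancing preserves the CSS condition.**
Given a CSS pair `H_X, H_Z` (with `H_X H_Zᵀ = 0`) and any classical parity-check `H_c`,
the distance-balanced matrices
`H̃_X = [H_X⊗1 | 1⊗H_cᵀ]` and `H̃_Z = fromBlocks (H_Z⊗1) 0 (1⊗H_c) (H_Xᵀ⊗1)`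
satisfy `H̃_X H̃_Zᵀ = 0` over `ZMod 2`. -/
theorem distance_balancing_css
    (n mX mZ mc nc : ℕ)
    (HX : Matrix (Fin mX) (Fin n) (ZMod 2)) (HZ : Matrix (Fin mZ) (Fin n) (ZMod 2))
    (hCSS : HX * HZᵀ = 0) (Hc : Matrix (Fin mc) (Fin nc) (ZMod 2)) :
    Matrix.fromCols (HX ⊗ₖ (1 : Matrix (Fin nc) (Fin nc) (ZMod 2)))
        ((1 : Matrix (Fin mX) (Fin mX) (ZMod 2)) ⊗ₖ Hcᵀ) *
      (Matrix.fromBlocks (HZ ⊗ₖ (1 : Matrix (Fin nc) (Fin nc) (ZMod 2))) 0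
        ((1 : Matrix (Fin n) (Fin n) (ZMod 2)) ⊗ₖ Hc)
        (HXᵀ ⊗ₖ (1 : Matrix (Fin mc) (Fin mc) (ZMod 2))))ᵀ = 0 := by
  rw [distanceBalanced_mul_transpose, hCSS, zero_kronecker, ZModModule.add_self,
    fromCols_zero]
end

section
/- (Validity of the logical operators of the direct construction.) Let k, d, r, s be positive naturals with s odd, and let C₀ be an r × s matrix over ZMod 2 whose rows all have even weight, i.e., C₀ *ᵥ (all-ones vector) = 0. Index the left-block physical qubits by Fin d × Fin k × Fin s and define, for each i ∈ Fin k: L_X i (a,j,c) = if j = i then 1 else 0, and L_Z i (a,j,c) = if (a = 0 ∧ j = i) then 1 else 0. Let M = 1_{d·k} ⊗ C₀ be the left block of H_X (rows indexed by Fin d × Fin k × Fin r, with M (a,j,t) (a',j',c) = if (a,j) = (a',j') then C₀ t c else 0), and let R be the permutation matrix on Fin d × Fin k × Fin s cyclically shifting the Fin d component by one. Then over ZMod 2: (i) L_X * L_Zᵀ = 1_k; (ii) M * L_Zᵀ = 0; (iii) (1 + R) * L_Xᵀ = 0; and (iv) the supports of L_X i for distinct i are disjoint. -/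
/-!
In tensor form `L_X = J_d ⊗ 1_k ⊗ J_s`, `L_Z = e ⊗ 1_k ⊗ J_s` and `M = 1_d ⊗ 1_k ⊗ C₀`, so the
products factor: `L_X L_Zᵀ = (J_dᵀ e) ⊗ 1_k ⊗ (J_sᵀ J_s) = s · 1_k`, which is `1_k` since `s` is
odd, and `M L_Zᵀ = e ⊗ 1_k ⊗ C₀ J_s = 0` because every row of `C₀` has even weight. The shift `R`
permutes only the `Fin d` coordinate, along which `L_X` is constant, so `R L_Xᵀ = L_Xᵀ` and
`(1 + R) L_Xᵀ = 2 L_Xᵀ = 0` over `ZMod 2`.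
-/

open Matrix

theorem Matrix.one_add_permMatrix_mul_eq_zero {ι m R : Type*} [Fintype ι] [DecidableEq ι]
    [Semiring R] [CharP R 2] (f : Equiv.Perm ι) (A : Matrix ι m R) (hA : ∀ p, A (f p) = A p) :
    (1 + f.permMatrix R) * A = 0 := by
  rw [Matrix.add_mul, Matrix.one_mul, PEquiv.toMatrix_toPEquiv_mul]
  ext p j
  simpa [hA] using CharTwo.add_self_eq_zero (A p j)

namespace DirectConstruction

variable {α κ σ ρ R : Type*} [DecidableEq κ] [Semiring R]

def logicalX : Matrix κ (α × κ × σ) R :=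
  of fun i p => if p.2.1 = i then 1 else 0

theorem logicalX_apply_mul_apply_of_ne {i j : κ} (hij : i ≠ j) (p : α × κ × σ) :
    (logicalX : Matrix κ (α × κ × σ) R) i p * logicalX j p = 0 := by
  by_cases h : p.2.1 = i
  · simp [logicalX, h, hij]
  · simp [logicalX, h]

variable [DecidableEq α]

def logicalZ (a₀ : α) : Matrix κ (α × κ × σ) R :=
  of fun i p => if p.1 = a₀ ∧ p.2.1 = i then 1 else 0

def leftBlockX (C : Matrix ρ σ R) : Matrix (α × κ × ρ) (α × κ × σ) R :=
  of fun t p => if (t.1, t.2.1) = (p.1, p.2.1) then C t.2.2 p.2.2 else 0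

variable [Fintype α] [Fintype κ] [Fintype σ]

theorem logicalX_mul_transpose_logicalZ (a₀ : α) :
    (logicalX : Matrix κ (α × κ × σ) R) * (logicalZ a₀ : Matrix κ (α × κ × σ) R)ᵀ =
      (Fintype.card σ : R) • (1 : Matrix κ κ R) := by
  ext i i'
  rw [mul_apply]
  simp [logicalX, logicalZ, Fintype.sum_prod_type, one_apply, ite_and, eq_comm,
    apply_ite Finset.card]

theorem leftBlockX_mul_transpose_logicalZ (C : Matrix ρ σ R) (a₀ : α) :
    (leftBlockX C : Matrix (α × κ × ρ) (α × κ × σ) R) *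
        (logicalZ a₀ : Matrix κ (α × κ × σ) R)ᵀ =
      of fun t i => if t.1 = a₀ ∧ t.2.1 = i then (C *ᵥ fun _ => 1) t.2.2 else 0 := by
  ext t i
  rw [mul_apply]
  obtain ⟨a, j, x⟩ := t
  simp [leftBlockX, logicalZ, Fintype.sum_prod_type, mulVec, dotProduct, ite_and]

end DirectConstruction

open DirectConstruction in
theorem direct_construction_logicals_general
    (k d r s : ℕ) (hd : 0 < d) (hsodd : Odd s)
    (C₀ : Matrix (Fin r) (Fin s) (ZMod 2))
    (hC₀ : C₀ *ᵥ (fun _ => 1) = 0) :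
    let LX : Matrix (Fin k) (Fin d × Fin k × Fin s) (ZMod 2) :=
      Matrix.of fun i p => if p.2.1 = i then 1 else 0
    let LZ : Matrix (Fin k) (Fin d × Fin k × Fin s) (ZMod 2) :=
      Matrix.of fun i p => if p.1 = (⟨0, hd⟩ : Fin d) ∧ p.2.1 = i then 1 else 0
    let M : Matrix (Fin d × Fin k × Fin r) (Fin d × Fin k × Fin s) (ZMod 2) :=
      Matrix.of fun t p => if (t.1, t.2.1) = (p.1, p.2.1) then C₀ t.2.2 p.2.2 else 0
    let R : Matrix (Fin d × Fin k × Fin s) (Fin d × Fin k × Fin s) (ZMod 2) :=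
      Matrix.of fun p p' => if p.1 = finRotate d p'.1 ∧ p.2 = p'.2 then 1 else 0
    LX * LZᵀ = 1 ∧
    M * LZᵀ = 0 ∧
    (1 + R) * LXᵀ = 0 ∧
    (∀ i j : Fin k, i ≠ j → ∀ p, LX i p * LX j p = 0) := by
  intro LX LZ M R
  have hR : R = Equiv.Perm.permMatrix (ZMod 2)
      ((finRotate d).prodCongr (Equiv.refl (Fin k × Fin s))).symm := by
    ext p p'
    simp only [R, of_apply, PEquiv.toMatrix_apply, Equiv.toPEquiv_apply, Option.mem_def,
      Option.some_inj, Equiv.symm_apply_eq]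
    simp [Prod.ext_iff]
  refine ⟨?_, ?_, ?_, ?_⟩
  · rw [show LX * LZᵀ = _ from logicalX_mul_transpose_logicalZ _, Fintype.card_fin,
      hsodd.natCast_zmod_two, one_smul]
  · rw [show M * LZᵀ = _ from leftBlockX_mul_transpose_logicalZ C₀ _, hC₀]
    ext t i
    simp
  · rw [hR]
    exact one_add_permMatrix_mul_eq_zero _ _ fun p => rfl
  · exact fun i j hij => logicalX_apply_mul_apply_of_ne hij

/-- **Validity of the logical operators of the direct construction.**
Left-block qubits are indexed by `Fin d × Fin k × Fin s`.  With `L_X i` supported on all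
qubits with middle index `i`, `L_Z i` on those with first index `0` and middle index `i`,
`M = 1_{d·k} ⊗ C₀` the left block of `H_X`, and `R` the permutation matrix cyclically
shifting the `Fin d` component, we have over `ZMod 2`:
(i) `L_X L_Zᵀ = 1`; (ii) `M L_Zᵀ = 0`; (iii) `(1 + R) L_Xᵀ = 0`; and
(iv) the supports of the `L_X i` are pairwise disjoint. -/
theorem direct_construction_logicals
    (k d r s : ℕ) (hk : 0 < k) (hd : 0 < d) (hr : 0 < r) (hs : 0 < s) (hsodd : Odd s)
    (C₀ : Matrix (Fin r) (Fin s) (ZMod 2))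
    (hC₀ : C₀ *ᵥ (fun _ => 1) = 0) :
    let LX : Matrix (Fin k) (Fin d × Fin k × Fin s) (ZMod 2) :=
      Matrix.of fun i p => if p.2.1 = i then 1 else 0
    let LZ : Matrix (Fin k) (Fin d × Fin k × Fin s) (ZMod 2) :=
      Matrix.of fun i p => if p.1 = (⟨0, hd⟩ : Fin d) ∧ p.2.1 = i then 1 else 0
    let M : Matrix (Fin d × Fin k × Fin r) (Fin d × Fin k × Fin s) (ZMod 2) :=
      Matrix.of fun t p => if (t.1, t.2.1) = (p.1, p.2.1) then C₀ t.2.2 p.2.2 else 0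
    let R : Matrix (Fin d × Fin k × Fin s) (Fin d × Fin k × Fin s) (ZMod 2) :=
      Matrix.of fun p p' => if p.1 = finRotate d p'.1 ∧ p.2 = p'.2 then 1 else 0
    LX * LZᵀ = 1 ∧
    M * LZᵀ = 0 ∧
    (1 + R) * LXᵀ = 0 ∧
    (∀ i j : Fin k, i ≠ j → ∀ p, LX i p * LX j p = 0) :=
  direct_construction_logicals_general k d r s hd hsodd C₀ hC₀
end
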